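/- Let (S, Z) be a right mutation double in an extriangulated category C and suppose U →^u U' → S' --→ U is an s^I-triangle with U, U' ∈ Ũ = CoCone_{E^I}(Z, S) and S' ∈ S. Then the induced morphism σ(u) : σU → σU' in Z/[I] is an isomorphism, where σ is the left adjoint of the inclusion Z/[I] → Ũ/[I]. -/

import Mathlib

/-!
STATEMENT 10: for a right mutation double, s^I-triangles with third term in S induce
isomorphisms under σ in Z/[I].
-/

set_option linter.unusedSectionVars false

open CategoryTheory CategoryTheory.Limits Opposite

universe v u

variable (C : Type u) [Category.{v} C] [Preadditive C] [HasZeroObject C] [HasBinaryBiproducts C]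

/-- An extriangulated category structure on `C` (Nakaoka–Palu): an additive bifunctor
`E : Cᵒᵖ × C ⥤ Ab` together with an additive realization of extensions by conflations,
subject to the axioms (ET1)–(ET4) and their duals.  The realization is encoded by the
predicate `conf f g δ` expressing that `X ⟶ Y ⟶ Z` realizes `δ ∈ E(Z, X)`. -/
structure ETStruct where
  /-- the extension bifunctor (ET1) -/
  E : Cᵒᵖ ⥤ C ⥤ AddCommGrpCat.{v}
  /-- `E` is additive in the contravariant variable -/
  additive_op : E.Additive
  /-- `E` is additive in the covariant variable -/
  additive : ∀ Z : Cᵒᵖ, (E.obj Z).Additive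
  /-- `conf f g δ` : the sequence `f, g` realizes the extension `δ` (it is an s-conflation) -/
  conf : ∀ ⦃X Y Z : C⦄, (X ⟶ Y) → (Y ⟶ Z) → ((E.obj (op Z)).obj X) → Prop
  /-- every extension is realized by some conflation (ET2) -/
  exists_real : ∀ ⦃X Z : C⦄ (δ : (E.obj (op Z)).obj X),
      ∃ (Y : C) (f : X ⟶ Y) (g : Y ⟶ Z), conf f g δ
  comp_zero : ∀ ⦃X Y Z : C⦄ ⦃f : X ⟶ Y⦄ ⦃g : Y ⟶ Z⦄ ⦃δ : (E.obj (op Z)).obj X⦄,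
      conf f g δ → f ≫ g = 0
  /-- realizations are well defined up to equivalence of three-term sequences -/
  conf_iso : ∀ ⦃X Y Y' Z : C⦄ ⦃f : X ⟶ Y⦄ ⦃g : Y ⟶ Z⦄ ⦃δ : (E.obj (op Z)).obj X⦄
      (e : Y ≅ Y'), conf f g δ → conf (f ≫ e.hom) (e.inv ≫ g) δ
  /-- the realization is additive: `0` is realized by the split conflation -/
  conf_zero : ∀ (X Z : C), conf (biprod.inl : X ⟶ X ⊞ Z) (biprod.snd : X ⊞ Z ⟶ Z)
      (0 : (E.obj (op Z)).obj X)
  /-- conversely, a conflation realizing `0` splits -/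
  split_of_zero : ∀ ⦃X Y Z : C⦄ ⦃f : X ⟶ Y⦄ ⦃g : Y ⟶ Z⦄,
      conf f g (0 : (E.obj (op Z)).obj X) → ∃ s : Z ⟶ Y, s ≫ g = 𝟙 Z
  /-- (ET3) -/
  et3 : ∀ ⦃X Y Z X' Y' Z' : C⦄ ⦃f : X ⟶ Y⦄ ⦃g : Y ⟶ Z⦄ ⦃δ : (E.obj (op Z)).obj X⦄
      ⦃f' : X' ⟶ Y'⦄ ⦃g' : Y' ⟶ Z'⦄ ⦃δ' : (E.obj (op Z')).obj X'⦄
      (a : X ⟶ X') (b : Y ⟶ Y'), conf f g δ → conf f' g' δ' → f ≫ b = a ≫ f' →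
      ∃ c : Z ⟶ Z', g ≫ c = b ≫ g' ∧
        (E.map c.op).app X' δ' = ((E.obj (op Z)).map a) δ
  /-- (ET3)ᵒᵖ -/
  et3op : ∀ ⦃X Y Z X' Y' Z' : C⦄ ⦃f : X ⟶ Y⦄ ⦃g : Y ⟶ Z⦄ ⦃δ : (E.obj (op Z)).obj X⦄
      ⦃f' : X' ⟶ Y'⦄ ⦃g' : Y' ⟶ Z'⦄ ⦃δ' : (E.obj (op Z')).obj X'⦄
      (b : Y ⟶ Y') (c : Z ⟶ Z'), conf f g δ → conf f' g' δ' → g ≫ c = b ≫ g' →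
      ∃ a : X ⟶ X', f ≫ b = a ≫ f' ∧
        (E.map c.op).app X' δ' = ((E.obj (op Z)).map a) δ
  /-- (ET4) -/
  et4 : ∀ ⦃X Y Z Cc Dd : C⦄ ⦃f : X ⟶ Y⦄ ⦃f' : Y ⟶ Cc⦄ ⦃δ : (E.obj (op Cc)).obj X⦄
      ⦃g : Y ⟶ Z⦄ ⦃g' : Z ⟶ Dd⦄ ⦃ε : (E.obj (op Dd)).obj Y⦄,
      conf f f' δ → conf g g' ε →
      ∃ (Ee : C) (h' : Z ⟶ Ee) (δ' : (E.obj (op Ee)).obj X) (c : Cc ⟶ Ee) (d : Ee ⟶ Dd),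
        conf (f ≫ g) h' δ' ∧ conf c d (((E.obj (op Dd)).map f') ε) ∧
        f' ≫ c = g ≫ h' ∧ h' ≫ d = g' ∧ (E.map c.op).app X δ' = δ
  /-- long-exact-sequence property: `δ` pulled back along `h` vanishes iff `h` lifts -/
  pull_zero_iff : ∀ ⦃X Y Z : C⦄ ⦃f : X ⟶ Y⦄ ⦃g : Y ⟶ Z⦄ ⦃δ : (E.obj (op Z)).obj X⦄,
      conf f g δ → ∀ ⦃W : C⦄ (h : W ⟶ Z),
        ((E.map h.op).app X δ = 0 ↔ ∃ k : W ⟶ Y, k ≫ g = h)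
  /-- long-exact-sequence property: `δ` pushed forward along `h` vanishes iff `h` extends -/
  push_zero_iff : ∀ ⦃X Y Z : C⦄ ⦃f : X ⟶ Y⦄ ⦃g : Y ⟶ Z⦄ ⦃δ : (E.obj (op Z)).obj X⦄,
      conf f g δ → ∀ ⦃W : C⦄ (h : X ⟶ W),
        (((E.obj (op Z)).map h) δ = 0 ↔ ∃ k : Y ⟶ W, f ≫ k = h)

namespace ETStruct

variable {C}
variable (T : ETStruct C)

/-- The group of `E`-extensions of `Z` by `X`. -/
abbrev ext (Z X : C) : Type v := (T.E.obj (op Z)).obj X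

/-- Push-forward `a · δ` of an extension along `a : X ⟶ X'`. -/
def push {X X' Z : C} (a : X ⟶ X') (δ : T.ext Z X) : T.ext Z X' :=
  ((T.E.obj (op Z)).map a) δ

/-- Pull-back `δ · b` of an extension along `b : Z' ⟶ Z`. -/
def pull {Z' Z X : C} (b : Z' ⟶ Z) (δ : T.ext Z X) : T.ext Z' X :=
  ((T.E.map b.op).app X) δ

/-- `δ ∈ E_I(Z, X)`: `δ` pulls back to zero from every object of `I`. -/
def memDown (I : Set C) {Z X : C} (δ : T.ext Z X) : Prop :=
  ∀ ⦃W : C⦄, W ∈ I → ∀ f : W ⟶ Z, T.pull f δ = 0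

/-- `δ ∈ E^I(Z, X)`: `δ` pushes forward to zero into every object of `I`. -/
def memUp (I : Set C) {Z X : C} (δ : T.ext Z X) : Prop :=
  ∀ ⦃W : C⦄, W ∈ I → ∀ g : X ⟶ W, T.push g δ = 0

end ETStruct

/-- `f : d ⟶ X` is a right `D`-approximation. -/
def RightApprox (D : Set C) {d X : C} (f : d ⟶ X) : Prop :=
  ∀ ⦃d' : C⦄, d' ∈ D → ∀ g : d' ⟶ X, ∃ h : d' ⟶ d, h ≫ f = g

/-- `f : X ⟶ d` is a left `D`-approximation. -/
def LeftApprox (D : Set C) {X d : C} (f : X ⟶ d) : Prop :=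
  ∀ ⦃d' : C⦄, d' ∈ D → ∀ g : X ⟶ d', ∃ h : d ⟶ d', f ≫ h = g

def ClosedSummands (D : Set C) : Prop :=
  ∀ ⦃X Y : C⦄, X ∈ D → ∀ (i : Y ⟶ X) (p : X ⟶ Y), i ≫ p = 𝟙 Y → Y ∈ D

variable {C}

namespace ETStruct

variable (T : ETStruct C)

/-- `I` is strongly contravariantly finite in `Xc`: every `X ∈ Xc` admits a deflation
from an object of `I` which is a right `I`-approximation. -/
def StronglyContraFinite (I Xc : Set C) : Prop :=
  ∀ ⦃X : C⦄, X ∈ Xc → ∃ W ∈ I, ∃ p : W ⟶ X, RightApprox C I p ∧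
    ∃ (X' : C) (i : X' ⟶ W) (δ : T.ext X X'), T.conf i p δ

/-- `I` is strongly covariantly finite in `Xc`: every `X ∈ Xc` admits an inflation
into an object of `I` which is a left `I`-approximation. -/
def StronglyCovFinite (I Xc : Set C) : Prop :=
  ∀ ⦃X : C⦄, X ∈ Xc → ∃ W ∈ I, ∃ i : X ⟶ W, LeftApprox C I i ∧
    ∃ (Z : C) (p : W ⟶ Z) (δ : T.ext Z X), T.conf i p δ

/-- `Cone_P(A, B)`: objects `Z` admitting a conflation `A' ⟶ B' ⟶ Z` whose extension
class satisfies `P` (e.g. lies in `E^I` or `E_I`), with `A' ∈ A` and `B' ∈ B`. -/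
def coneRel (P : ∀ ⦃Z X : C⦄, T.ext Z X → Prop) (A B : Set C) : Set C :=
  {Z | ∃ (A' B' : C) (_ : A' ∈ A) (_ : B' ∈ B) (f : A' ⟶ B') (g : B' ⟶ Z)
      (δ : T.ext Z A'), T.conf f g δ ∧ P δ}

/-- `CoCone_P(A, B)`: objects `W` admitting a conflation `W ⟶ A' ⟶ B'` whose extension
class satisfies `P`, with `A' ∈ A` and `B' ∈ B`. -/
def coconeRel (P : ∀ ⦃Z X : C⦄, T.ext Z X → Prop) (A B : Set C) : Set C :=
  {W | ∃ (A' B' : C) (_ : A' ∈ A) (_ : B' ∈ B) (f : W ⟶ A') (g : A' ⟶ B')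
      (δ : T.ext B' W), T.conf f g δ ∧ P δ}

/-- `E^I(A, B) = 0` (`A` in the contravariant slot). -/
def vanishUp (I A B : Set C) : Prop :=
  ∀ ⦃Z X : C⦄, Z ∈ A → X ∈ B → ∀ δ : T.ext Z X, T.memUp I δ → δ = 0

/-- `E_I(A, B) = 0` (`A` in the contravariant slot). -/
def vanishDown (I A B : Set C) : Prop :=
  ∀ ⦃Z X : C⦄, Z ∈ A → X ∈ B → ∀ δ : T.ext Z X, T.memDown I δ → δ = 0

/-- `A` is closed under extensions in `(C, E^I)`. -/
def extClosedUp (I A : Set C) : Prop :=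
  ∀ ⦃X Y Z : C⦄ ⦃f : X ⟶ Y⦄ ⦃g : Y ⟶ Z⦄ ⦃δ : T.ext Z X⦄,
    T.conf f g δ → T.memUp I δ → X ∈ A → Z ∈ A → Y ∈ A

/-- `A` is closed under extensions in `(C, E_I)`. -/
def extClosedDown (I A : Set C) : Prop :=
  ∀ ⦃X Y Z : C⦄ ⦃f : X ⟶ Y⦄ ⦃g : Y ⟶ Z⦄ ⦃δ : T.ext Z X⦄,
    T.conf f g δ → T.memDown I δ → X ∈ A → Z ∈ A → Y ∈ A

/-- `Z⟨1⟩ = Cone_{E^I}(Z, I)`. -/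
def shiftPlus (I Zc : Set C) : Set C := T.coneRel (fun _ _ δ => T.memUp I δ) Zc I

/-- `Z⟨-1⟩ = CoCone_{E_I}(I, Z)`. -/
def shiftMinus (I Zc : Set C) : Set C := T.coconeRel (fun _ _ δ => T.memDown I δ) I Zc

/-- `Ũ = CoCone_{E^I}(Z, S)`. -/
def Utilde (I Sc Zc : Set C) : Set C := T.coconeRel (fun _ _ δ => T.memUp I δ) Zc Sc

/-- `T̃ = Cone_{E_I}(V, Z)`. -/
def Ttilde (I Zc Vc : Set C) : Set C := T.coneRel (fun _ _ δ => T.memDown I δ) Vc Zc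

end ETStruct

section IdealQuotient

/-- `f` factors through an object of `I`. -/
def FactorsThru (I : Set C) {X Y : C} (f : X ⟶ Y) : Prop :=
  ∃ (W : C) (_ : W ∈ I) (p : X ⟶ W) (q : W ⟶ Y), f = p ≫ q

/-- Morphisms of the full subcategory on `Z` are identified when their difference factors
through an object of `I`; the quotient is the additive quotient `Z/[I]`. -/
def idealRel (I Z : Set C) : HomRel (ObjectProperty.FullSubcategory (· ∈ Z)) :=
  fun {X Y} f g => FactorsThru I ((f.hom : X.obj ⟶ Y.obj) - (g.hom : X.obj ⟶ Y.obj))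

/-- The additive quotient `Z/[I]`. -/
abbrev IdealQuotient (I Z : Set C) := CategoryTheory.Quotient (idealRel I Z)

variable {I : Set C}

theorem factorsThru_zero (hne : I.Nonempty) (X Y : C) : FactorsThru I (0 : X ⟶ Y) := by
  obtain ⟨W, hW⟩ := hne
  exact ⟨W, hW, 0, 0, by simp⟩

theorem factorsThru_neg {X Y : C} {f : X ⟶ Y} (h : FactorsThru I f) :
    FactorsThru I (-f) := by
  obtain ⟨W, hW, p, q, rfl⟩ := h
  exact ⟨W, hW, -p, q, by simp⟩

theorem factorsThru_add (hbi : ∀ ⦃W W' : C⦄, W ∈ I → W' ∈ I → (W ⊞ W') ∈ I)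
    {X Y : C} {f g : X ⟶ Y} (hf : FactorsThru I f) (hg : FactorsThru I g) :
    FactorsThru I (f + g) := by
  obtain ⟨W, hW, p, q, rfl⟩ := hf
  obtain ⟨W', hW', p', q', rfl⟩ := hg
  exact ⟨W ⊞ W', hbi hW hW', biprod.lift p p', biprod.desc q q', by simp⟩

theorem factorsThru_comp_left {X' X Y : C} (f : X' ⟶ X) {g : X ⟶ Y}
    (hg : FactorsThru I g) : FactorsThru I (f ≫ g) := by
  obtain ⟨W, hW, p, q, rfl⟩ := hg
  exact ⟨W, hW, f ≫ p, q, by simp⟩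

theorem factorsThru_comp_right {X Y Y' : C} {f : X ⟶ Y} (g : Y ⟶ Y')
    (hf : FactorsThru I f) : FactorsThru I (f ≫ g) := by
  obtain ⟨W, hW, p, q, rfl⟩ := hf
  exact ⟨W, hW, p, q ≫ g, by simp⟩

theorem idealRel_congruence (Z : Set C) (hne : I.Nonempty)
    (hbi : ∀ ⦃W W' : C⦄, W ∈ I → W' ∈ I → (W ⊞ W') ∈ I) :
    Congruence (idealRel I Z) where
  equivalence := by
    intro X Y
    constructor
    · intro f
      simpa [idealRel, sub_self] using factorsThru_zero hne X.obj Y.obj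
    · intro f g h
      simpa [idealRel, neg_sub] using factorsThru_neg h
    · intro f g k hfg hgk
      have := factorsThru_add hbi hfg hgk
      simpa [idealRel, sub_add_sub_cancel] using this
  comp_left := by
    intro X Y Z' f g g' h
    have := factorsThru_comp_left (I := I) (f.hom : X.obj ⟶ Y.obj) h
    simpa [idealRel, Preadditive.comp_sub] using this
  comp_right := by
    intro X Y Z' f f' g h
    have := factorsThru_comp_right (I := I) (g.hom : Y.obj ⟶ Z'.obj) h
    simpa [idealRel, Preadditive.sub_comp] using this

/-- The preadditive structure on the ideal quotient `Z/[I]`. -/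
def quotPreadditive (Z : Set C) (hne : I.Nonempty)
    (hbi : ∀ ⦃W W' : C⦄, W ∈ I → W' ∈ I → (W ⊞ W') ∈ I) :
    Preadditive (IdealQuotient I Z) :=
  letI : Congruence (idealRel I Z) := idealRel_congruence Z hne hbi
  Quotient.preadditive (idealRel I Z) (by
    intro X Y f₁ f₂ g₁ g₂ h₁ h₂
    have := factorsThru_add hbi h₁ h₂
    change FactorsThru I ((f₁.hom + g₁.hom) - (f₂.hom + g₂.hom))
    simpa [idealRel, add_sub_add_comm] using this)

/-- The inclusion functor `A/[I] ⥤ B/[I]` for `A ⊆ B`. -/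
def idealInclusion (I A B : Set C) (hAB : A ⊆ B) :
    IdealQuotient I A ⥤ IdealQuotient I B :=
  CategoryTheory.Quotient.lift _
    (ObjectProperty.ιOfLE (fun _ hX => hAB hX) ⋙ CategoryTheory.Quotient.functor (idealRel I B))
    (fun _ _ _ _ h => CategoryTheory.Quotient.sound _ (by simpa [idealRel] using h))

end IdealQuotient

namespace ETStruct

variable (T : ETStruct C)

/-- A premutation triple `(S, Z, V)`: conditions (MT1) and (MT2), with
`I = S ∩ Z = Z ∩ V` strongly functorially finite in `Z`. -/
structure IsPremutationTriple (Sc Zc Vc : Set C) : Prop where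
  sumS : ClosedSummands C Sc
  sumZ : ClosedSummands C Zc
  sumV : ClosedSummands C Vc
  /-- (MT1): `S ∩ Z = Z ∩ V` -/
  inter_eq : Sc ∩ Zc = Zc ∩ Vc
  /-- (MT1): `I ⊆ Z` is strongly contravariantly finite -/
  strong_contra : T.StronglyContraFinite (Sc ∩ Zc) Zc
  /-- (MT1): `I ⊆ Z` is strongly covariantly finite -/
  strong_cov : T.StronglyCovFinite (Sc ∩ Zc) Zc
  /-- (MT2)(i): `E^I(S, Z) = 0` -/
  mt2_i₁ : T.vanishUp (Sc ∩ Zc) Sc Zc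
  /-- (MT2)(i): `E_I(S, Z⟨-1⟩) = 0` -/
  mt2_i₂ : T.vanishDown (Sc ∩ Zc) Sc (T.shiftMinus (Sc ∩ Zc) Zc)
  /-- (MT2)(ii): `E_I(Z, V) = 0` -/
  mt2_ii₁ : T.vanishDown (Sc ∩ Zc) Zc Vc
  /-- (MT2)(ii): `E^I(Z⟨1⟩, V) = 0` -/
  mt2_ii₂ : T.vanishUp (Sc ∩ Zc) (T.shiftPlus (Sc ∩ Zc) Zc) Vc

/-- A mutation triple: a premutation triple which moreover satisfies (MT3). -/
structure IsMutationTriple (Sc Zc Vc : Set C) : Prop extends T.IsPremutationTriple Sc Zc Vc where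
  /-- (MT3)(i): `Cone_{E^I}(Z, Z) ⊆ Ũ` -/
  mt3_i₁ : T.coneRel (fun _ _ δ => T.memUp (Sc ∩ Zc) δ) Zc Zc ⊆ T.Utilde (Sc ∩ Zc) Sc Zc
  /-- (MT3)(i): `CoCone_{E_I}(Z, Z) ⊆ T̃` -/
  mt3_i₂ : T.coconeRel (fun _ _ δ => T.memDown (Sc ∩ Zc) δ) Zc Zc ⊆ T.Ttilde (Sc ∩ Zc) Zc Vc
  /-- (MT3)(ii): `S` is closed under `E^I`-extensions -/
  mt3_ii_S : T.extClosedUp (Sc ∩ Zc) Sc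
  /-- (MT3)(ii): `Z` is closed under `E^I`-extensions -/
  mt3_ii_Zup : T.extClosedUp (Sc ∩ Zc) Zc
  /-- (MT3)(ii): `Z` is closed under `E_I`-extensions -/
  mt3_ii_Zdown : T.extClosedDown (Sc ∩ Zc) Zc
  /-- (MT3)(ii): `V` is closed under `E_I`-extensions -/
  mt3_ii_V : T.extClosedDown (Sc ∩ Zc) Vc

/-- A right mutation double `(S, Z)`: conditions (MT1), (RM2) and (RM3) (with `V := I`). -/
structure IsRightMutationDouble (Sc Zc : Set C) : Prop where
  sumS : ClosedSummands C Sc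
  sumZ : ClosedSummands C Zc
  strong_contra : T.StronglyContraFinite (Sc ∩ Zc) Zc
  strong_cov : T.StronglyCovFinite (Sc ∩ Zc) Zc
  /-- (RM2): `E^I(S, Z) = 0` -/
  rm2₁ : T.vanishUp (Sc ∩ Zc) Sc Zc
  /-- (RM2): `E_I(S, Z⟨-1⟩) = 0` -/
  rm2₂ : T.vanishDown (Sc ∩ Zc) Sc (T.shiftMinus (Sc ∩ Zc) Zc)
  /-- (RM3): `Cone_{E^I}(Z, Z) ⊆ Ũ` -/
  rm3₁ : T.coneRel (fun _ _ δ => T.memUp (Sc ∩ Zc) δ) Zc Zc ⊆ T.Utilde (Sc ∩ Zc) Sc Zc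
  /-- (RM3): `S` is closed under `E^I`-extensions -/
  rm3_S : T.extClosedUp (Sc ∩ Zc) Sc
  /-- (RM3): `Z` is closed under `E^I`-extensions -/
  rm3_Z : T.extClosedUp (Sc ∩ Zc) Zc

end ETStruct



/-!
`σ(u)` is represented by any `z` with `hu ≫ z = u ≫ hu'`. Since `E^I(S, Z) = 0`, the inflation
of an `s^I`-triangle with third term in `S` is a left `Z`-approximation; this gives
`k : U' ⟶ Z^U` with `u ≫ k = hu` and then `z' : Z^{U'} ⟶ Z^U` with `hu' ≫ z' = k`.
Since `E_I(S, Z⟨-1⟩) = 0`, every morphism from `S` to `Z` factors through `I`, so a morphism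
out of `Z^U` into `Z` that vanishes on `U` (or, via the approximation property once more, merely
factors through `I` on `U`) factors through `I`. Both `z ≫ z' - 𝟙` and `z' ≫ z - 𝟙` are of
this kind.
-/

namespace ETStruct

variable (T : ETStruct C)

theorem push_push {X X' X'' Z : C} (a : X ⟶ X') (b : X' ⟶ X'') (δ : T.ext Z X) :
    T.push b (T.push a δ) = T.push (a ≫ b) δ := by
  simp [push, Functor.map_comp]

theorem pull_pull {Z Z' Z'' X : C} (b : Z' ⟶ Z) (f : Z'' ⟶ Z') (δ : T.ext Z X) :
    T.pull f (T.pull b δ) = T.pull (f ≫ b) δ := by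
  simp [pull, op_comp, Functor.map_comp]

variable {T}

theorem memUp.push {I : Set C} {X X' Z : C} {δ : T.ext Z X} (h : T.memUp I δ) (a : X ⟶ X') :
    T.memUp I (T.push a δ) := fun _ hW g => by
  rw [push_push]
  exact h hW (a ≫ g)

theorem memDown.pull {I : Set C} {Z Z' X : C} {δ : T.ext Z X} (h : T.memDown I δ)
    (b : Z' ⟶ Z) : T.memDown I (T.pull b δ) := fun _ hW f => by
  rw [pull_pull]
  exact h hW (f ≫ b)

variable (T)

theorem memUp_zero {I : Set C} {X Z : C} : T.memUp I (0 : T.ext Z X) :=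
  fun _ _ g => by simp [push]

open ZeroObject in
theorem exists_desc_of_comp_eq_zero {X Y Z W : C} {f : X ⟶ Y} {g : Y ⟶ Z} {δ : T.ext Z X}
    (hc : T.conf f g δ) (t : Y ⟶ W) (ht : f ≫ t = 0) : ∃ s : Z ⟶ W, g ≫ s = t := by
  let e : (0 : C) ⊞ W ≅ W :=
    ⟨biprod.snd, biprod.inr, biprod.hom_ext' _ _ ((isZero_zero C).eq_of_src _ _) (by simp),
      by simp⟩
  have hsplit : T.conf (biprod.inl ≫ e.hom) (e.inv ≫ biprod.snd) (0 : T.ext W 0) :=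
    T.conf_iso e (T.conf_zero 0 W)
  obtain ⟨s, hs, -⟩ := T.et3 (0 : X ⟶ 0) t hc hsplit (by rw [ht, zero_comp])
  exact ⟨s, by simpa [e] using hs⟩

end ETStruct

section IdealQuotient

variable {I Zc : Set C}

theorem isIso_map_homMk_of_factorsThru {X Y : ObjectProperty.FullSubcategory (· ∈ Zc)}
    (f : X.obj ⟶ Y.obj) (g : Y.obj ⟶ X.obj) (hfg : FactorsThru I (f ≫ g - 𝟙 X.obj))
    (hgf : FactorsThru I (g ≫ f - 𝟙 Y.obj)) :
    IsIso ((Quotient.functor (idealRel I Zc)).map (ObjectProperty.homMk f)) := by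
  refine ⟨(Quotient.functor (idealRel I Zc)).map (ObjectProperty.homMk g), ?_, ?_⟩
  all_goals rw [← Functor.map_comp, ← CategoryTheory.Functor.map_id]
  exacts [CategoryTheory.Quotient.sound _ hfg, CategoryTheory.Quotient.sound _ hgf]

end IdealQuotient

namespace ETStruct.IsRightMutationDouble

variable {T : ETStruct C} {Sc Zc : Set C}

theorem biprod_mem (hmd : T.IsRightMutationDouble Sc Zc) ⦃W W' : C⦄ (hW : W ∈ Sc ∩ Zc)
    (hW' : W' ∈ Sc ∩ Zc) : (W ⊞ W') ∈ Sc ∩ Zc :=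
  ⟨hmd.rm3_S (T.conf_zero W W') T.memUp_zero hW.1 hW'.1,
    hmd.rm3_Z (T.conf_zero W W') T.memUp_zero hW.2 hW'.2⟩

theorem exists_comp_eq (hmd : T.IsRightMutationDouble Sc Zc) {X Y Z Z₂ : C} {f : X ⟶ Y}
    {g : Y ⟶ Z} {δ : T.ext Z X} (hc : T.conf f g δ) (hδ : T.memUp (Sc ∩ Zc) δ) (hZ : Z ∈ Sc)
    (hZ₂ : Z₂ ∈ Zc) (a : X ⟶ Z₂) : ∃ k : Y ⟶ Z₂, f ≫ k = a :=
  (T.push_zero_iff hc a).mp (hmd.rm2₁ hZ hZ₂ _ (hδ.push a))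

/-- The right `I`-approximation of `Z₀` is a deflation whose extension lies in `E_I` and whose
first term lies in `Z⟨-1⟩`; `E_I(S, Z⟨-1⟩) = 0` lets `s` lift along it. -/
theorem factorsThru_of_source_mem_of_target_mem (hmd : T.IsRightMutationDouble Sc Zc)
    {S₀ Z₀ : C} (hS₀ : S₀ ∈ Sc) (hZ₀ : Z₀ ∈ Zc) (s : S₀ ⟶ Z₀) : FactorsThru (Sc ∩ Zc) s := by
  obtain ⟨W, hW, p, hp, X', i, ε, hε⟩ := hmd.strong_contra hZ₀
  have hεI : T.memDown (Sc ∩ Zc) ε := fun _ hW₀ f => (T.pull_zero_iff hε f).mpr (hp hW₀ f)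
  have hX' : X' ∈ T.shiftMinus (Sc ∩ Zc) Zc := ⟨W, Z₀, hW, hZ₀, i, p, ε, hε, hεI⟩
  obtain ⟨k, hk⟩ := (T.pull_zero_iff hε s).mp (hmd.rm2₂ hS₀ hX' _ (hεI.pull s))
  exact ⟨W, hW, k, p, hk.symm⟩

theorem factorsThru_of_comp_eq_zero (hmd : T.IsRightMutationDouble Sc Zc) {X Y Z Z₂ : C}
    {f : X ⟶ Y} {g : Y ⟶ Z} {δ : T.ext Z X} (hc : T.conf f g δ) (hZ : Z ∈ Sc) (hZ₂ : Z₂ ∈ Zc)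
    {φ : Y ⟶ Z₂} (hφ : f ≫ φ = 0) : FactorsThru (Sc ∩ Zc) φ := by
  obtain ⟨s, rfl⟩ := T.exists_desc_of_comp_eq_zero hc φ hφ
  exact factorsThru_comp_left g (hmd.factorsThru_of_source_mem_of_target_mem hZ hZ₂ s)

theorem factorsThru_of_factorsThru_comp (hmd : T.IsRightMutationDouble Sc Zc) {X Y Z Z₂ : C}
    {f : X ⟶ Y} {g : Y ⟶ Z} {δ : T.ext Z X} (hc : T.conf f g δ) (hδ : T.memUp (Sc ∩ Zc) δ)
    (hZ : Z ∈ Sc) (hZ₂ : Z₂ ∈ Zc) {φ : Y ⟶ Z₂} (hφ : FactorsThru (Sc ∩ Zc) (f ≫ φ)) :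
    FactorsThru (Sc ∩ Zc) φ := by
  obtain ⟨W, hW, a, b, hab⟩ := hφ
  obtain ⟨m, rfl⟩ := hmd.exists_comp_eq hc hδ hZ hW.2 a
  have hrest : FactorsThru (Sc ∩ Zc) (φ - m ≫ b) :=
    hmd.factorsThru_of_comp_eq_zero hc hZ hZ₂ (by simp [Preadditive.comp_sub, hab])
  simpa using factorsThru_add hmd.biprod_mem hrest ⟨W, hW, m, b, rfl⟩

end ETStruct.IsRightMutationDouble

open ETStruct in
theorem statement10_general (T : ETStruct C) (Sc Zc : Set C)
    (hmd : T.IsRightMutationDouble Sc Zc)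
    -- the s^I-triangle `U ⟶ U' ⟶ S' ⇢ U` with `U, U' ∈ Ũ`, `S' ∈ S`
    (U U' S' : C)
    (hS' : S' ∈ Sc) (u : U ⟶ U') (w : U' ⟶ S') (δ : T.ext S' U)
    (hc : T.conf u w δ) (hδ : T.memUp (Sc ∩ Zc) δ)
    -- the chosen s^I-triangles defining `σU` and `σU'`
    (ZU S₁ : C) (hZU : ZU ∈ Zc) (hS₁ : S₁ ∈ Sc)
    (hu : U ⟶ ZU) (gu : ZU ⟶ S₁) (ρ : T.ext S₁ U)
    (hcu : T.conf hu gu ρ)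
    (ZU' S₂ : C) (hZU' : ZU' ∈ Zc) (hS₂ : S₂ ∈ Sc)
    (hu' : U' ⟶ ZU') (gu' : ZU' ⟶ S₂) (ρ' : T.ext S₂ U')
    (hcu' : T.conf hu' gu' ρ') (hρ' : T.memUp (Sc ∩ Zc) ρ')
    -- `σ(u)` : any morphism `z` making the square commute
    (z : ZU ⟶ ZU') (hz : hu ≫ z = u ≫ hu') :
    IsIso ((CategoryTheory.Quotient.functor (idealRel (Sc ∩ Zc) Zc)).map
      (show (⟨ZU, hZU⟩ : ObjectProperty.FullSubcategory (· ∈ Zc)) ⟶ ⟨ZU', hZU'⟩ from ObjectProperty.homMk z)) := by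
  obtain ⟨k, hk⟩ := hmd.exists_comp_eq hc hδ hS' hZU hu
  obtain ⟨z', hz'⟩ := hmd.exists_comp_eq hcu' hρ' hS₂ hZU k
  refine isIso_map_homMk_of_factorsThru (X := ⟨ZU, hZU⟩) (Y := ⟨ZU', hZU'⟩) z z' ?_ ?_
  · refine hmd.factorsThru_of_comp_eq_zero hcu hS₁ hZU ?_
    simp [Preadditive.comp_sub, reassoc_of% hz, hz', hk]
  · have hkz : FactorsThru (Sc ∩ Zc) (k ≫ z - hu') := by
      refine hmd.factorsThru_of_comp_eq_zero hc hS' hZU' ?_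
      simp [Preadditive.comp_sub, reassoc_of% hk, hz]
    refine hmd.factorsThru_of_factorsThru_comp hcu' hρ' hS₂ hZU' ?_
    simpa [Preadditive.comp_sub, reassoc_of% hz'] using hkz

open ETStruct in
/-- For a right mutation double `(S, Z)`, if `U ⟶ U' ⟶ S' ⇢ U` is an
s^I-triangle with `U, U' ∈ Ũ` and `S' ∈ S`, then the induced morphism
`σ(u) : σU ⟶ σU'` is an isomorphism in `Z/[I]`. -/
theorem statement10 (T : ETStruct C) (Sc Zc : Set C)
    (hmd : T.IsRightMutationDouble Sc Zc)
    -- the s^I-triangle `U ⟶ U' ⟶ S' ⇢ U` with `U, U' ∈ Ũ`, `S' ∈ S`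
    (U U' S' : C) (hU : U ∈ T.Utilde (Sc ∩ Zc) Sc Zc) (hU' : U' ∈ T.Utilde (Sc ∩ Zc) Sc Zc)
    (hS' : S' ∈ Sc) (u : U ⟶ U') (w : U' ⟶ S') (δ : T.ext S' U)
    (hc : T.conf u w δ) (hδ : T.memUp (Sc ∩ Zc) δ)
    -- the chosen s^I-triangles defining `σU` and `σU'`
    (ZU S₁ : C) (hZU : ZU ∈ Zc) (hS₁ : S₁ ∈ Sc)
    (hu : U ⟶ ZU) (gu : ZU ⟶ S₁) (ρ : T.ext S₁ U)
    (hcu : T.conf hu gu ρ) (hρ : T.memUp (Sc ∩ Zc) ρ)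
    (ZU' S₂ : C) (hZU' : ZU' ∈ Zc) (hS₂ : S₂ ∈ Sc)
    (hu' : U' ⟶ ZU') (gu' : ZU' ⟶ S₂) (ρ' : T.ext S₂ U')
    (hcu' : T.conf hu' gu' ρ') (hρ' : T.memUp (Sc ∩ Zc) ρ')
    -- `σ(u)` : any morphism `z` making the square commute
    (z : ZU ⟶ ZU') (hz : hu ≫ z = u ≫ hu') :
    IsIso ((CategoryTheory.Quotient.functor (idealRel (Sc ∩ Zc) Zc)).map
      (show (⟨ZU, hZU⟩ : ObjectProperty.FullSubcategory (· ∈ Zc)) ⟶ ⟨ZU', hZU'⟩ from ObjectProperty.homMk z)) :=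
  statement10_general T Sc Zc hmd U U' S' hS' u w δ hc hδ ZU S₁ hZU hS₁ hu gu ρ hcu ZU' S₂ hZU' hS₂
    hu' gu' ρ' hcu' hρ' z hz
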